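/- The inclusion map H^s → H^t for s > t is a compact operator, where H^s is the Hilbert space completion of finitely supported sequences on ℤⁿ under the norm ‖a‖_s² = ∑_m (1+|m|²)^s |a_m|². -/

import Mathlib

/-!
The inclusion `H^s → H^t` is the norm limit, as `R → ∞`, of the cutoffs `f ↦ 𝟙_{B_R} f` to the
finite sets `B_R = {m | 1 + |m|² ≤ R}`, which have finite rank. Off `B_R` the ratio of the
weights is `(1 + |m|²)^(t - s) ≤ R^(t - s)`, so the remainder has norm at most
`R^((t - s)/2) → 0`, and a norm limit of compact operators is compact.
-/

open Real MeasureTheory Filter Topology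
open scoped ENNReal

/-- The Sobolev space `H^s` on `ℤⁿ`, realized as `L²` of the counting measure
weighted by `(1+|m|²)^s`. -/
noncomputable def sobolevMeasure (n : ℕ) (s : ℝ) : Measure (Fin n → ℤ) :=
  Measure.count.withDensity
    (fun m => ENNReal.ofReal ((1 + ∑ j : Fin n, (|(m j : ℝ)|) ^ 2) ^ s))

theorem Real.rpow_le_rpow_sub_mul_rpow {R x s t : ℝ} (hR : 0 < R) (hRx : R ≤ x) (hts : t ≤ s) :
    x ^ t ≤ R ^ (t - s) * x ^ s := by
  have hx : 0 < x := hR.trans_le hRx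
  calc x ^ t = x ^ (t - s) * x ^ s := by rw [← Real.rpow_add hx, sub_add_cancel]
    _ ≤ R ^ (t - s) * x ^ s := by
      have := Real.rpow_le_rpow_of_nonpos hR hRx (sub_nonpos.2 hts)
      gcongr

theorem MeasureTheory.Measure.restrict_withDensity_le_smul {α : Type*} [MeasurableSpace α]
    {ν : Measure α} {f g : α → ℝ≥0∞} {B : Set α} {c : ℝ≥0∞} (hB : MeasurableSet B)
    (hg : Measurable g) (hfg : ∀ x ∈ B, f x ≤ c * g x) :
    (ν.withDensity f).restrict B ≤ c • ν.withDensity g := by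
  rw [restrict_withDensity hB, ← withDensity_indicator hB, ← withDensity_smul c hg]
  exact withDensity_mono (Eventually.of_forall (Set.indicator_le hfg))

theorem isCompactOperator_of_finiteDimensional_range {𝕜 E F : Type*} [NontriviallyNormedField 𝕜]
    [ProperSpace 𝕜] [NormedAddCommGroup E] [NormedSpace 𝕜 E] [NormedAddCommGroup F]
    [NormedSpace 𝕜 F] (T : E →L[𝕜] F) [FiniteDimensional 𝕜 (LinearMap.range (T : E →ₗ[𝕜] F))] :
    IsCompactOperator T :=
  have := FiniteDimensional.proper 𝕜 (LinearMap.range (T : E →ₗ[𝕜] F))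
  (isCompactOperator_of_locallyCompactSpace_dom
    (T.codRestrict (LinearMap.range (T : E →ₗ[𝕜] F)) fun x => ⟨x, rfl⟩)).clm_comp
    (LinearMap.range (T : E →ₗ[𝕜] F)).subtypeL

theorem Set.indicator_eq_sum_mul_indicator_singleton {α R : Type*} [NonAssocSemiring R]
    {B : Set α} [Fintype B] (f : α → R) (x : α) :
    B.indicator f x = ∑ a : B, f a * ({(a : α)} : Set α).indicator 1 x := by
  by_cases hx : x ∈ B
  · rw [Finset.sum_eq_single ⟨x, hx⟩ (fun a _ hax => by simp [Ne.symm (Subtype.coe_ne_coe.2 hax)])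
      (by simp)]
    simp [hx]
  · simp [hx, fun a : B => show x ≠ a from fun hxa => hx (hxa ▸ a.2)]

namespace MeasureTheory.Lp

variable {α 𝕜 E : Type*} [MeasurableSpace α] {μ ν : Measure α} [NontriviallyNormedField 𝕜]
  [NormedAddCommGroup E] [NormedSpace 𝕜 E] {p : ℝ≥0∞} {B : Set α} {c : ℝ≥0∞}

theorem memLp_indicator_of_restrict_le_smul (hB : MeasurableSet B) (hc : c ≠ ∞)
    (h : μ.restrict B ≤ c • ν) (f : Lp E p ν) : MemLp (B.indicator f) p μ :=
  (memLp_indicator_iff_restrict hB).2 ((Lp.memLp f).of_measure_le_smul hc h)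

theorem indicator_ae_eq_of_restrict_le_smul (hB : MeasurableSet B) (h : μ.restrict B ≤ c • ν)
    {f g : α → E} (hfg : f =ᵐ[ν] g) : B.indicator f =ᵐ[μ] B.indicator g :=
  (ae_eq_restrict_iff_indicator_ae_eq hB).1
    ((Measure.absolutelyContinuous_of_le_smul h).ae_eq hfg)

theorem norm_toLp_indicator_le (hB : MeasurableSet B) (hc : c ≠ ∞) (h : μ.restrict B ≤ c • ν)
    (f : Lp E p ν) (hf : MemLp (B.indicator f) p μ) :
    ‖hf.toLp _‖ ≤ c.toReal ^ (1 / p).toReal * ‖f‖ := by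
  rw [Lp.norm_toLp, eLpNorm_indicator_eq_eLpNorm_restrict hB, Lp.norm_def, ENNReal.toReal_rpow,
    ← ENNReal.toReal_mul]
  exact ENNReal.toReal_mono (by simp [ENNReal.mul_eq_top, hc, Lp.eLpNorm_ne_top])
    (eLpNorm_le_of_measure_le_smul h)

variable [Fact (1 ≤ p)]

variable (𝕜) in
noncomputable def indicatorCLM (hB : MeasurableSet B) (hc : c ≠ ∞) (h : μ.restrict B ≤ c • ν) :
    Lp E p ν →L[𝕜] Lp E p μ :=
  LinearMap.mkContinuous
    { toFun f := (memLp_indicator_of_restrict_le_smul hB hc h f).toLp _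
      map_add' f g := by
        rw [← MemLp.toLp_add, MemLp.toLp_eq_toLp_iff, ← Set.indicator_add']
        exact indicator_ae_eq_of_restrict_le_smul hB h (Lp.coeFn_add f g)
      map_smul' a f := by
        rw [RingHom.id_apply, ← MemLp.toLp_const_smul, MemLp.toLp_eq_toLp_iff]
        filter_upwards [indicator_ae_eq_of_restrict_le_smul hB h (Lp.coeFn_smul a f)] with x hx
        exact hx.trans (Set.indicator_const_smul_apply B a f x) }
    _ fun f => norm_toLp_indicator_le hB hc h f (memLp_indicator_of_restrict_le_smul hB hc h f)

variable (𝕜) in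
theorem coeFn_indicatorCLM (hB : MeasurableSet B) (hc : c ≠ ∞) (h : μ.restrict B ≤ c • ν)
    (f : Lp E p ν) : indicatorCLM 𝕜 hB hc h f =ᵐ[μ] B.indicator f :=
  MemLp.coeFn_toLp (memLp_indicator_of_restrict_le_smul hB hc h f)

theorem norm_indicatorCLM_le (hB : MeasurableSet B) (hc : c ≠ ∞) (h : μ.restrict B ≤ c • ν)
    {c' : ℝ≥0∞} (hc' : c' ≠ ∞) (h' : μ.restrict B ≤ c' • ν) :
    ‖indicatorCLM (E := E) (p := p) 𝕜 hB hc h‖ ≤ c'.toReal ^ (1 / p).toReal :=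
  ContinuousLinearMap.opNorm_le_bound _ (Real.rpow_nonneg ENNReal.toReal_nonneg _) fun f =>
    norm_toLp_indicator_le hB hc' h' f (memLp_indicator_of_restrict_le_smul hB hc h f)

theorem indicatorCLM_univ_sub_indicatorCLM {cu : ℝ≥0∞} (hcu : cu ≠ ∞)
    (hu : μ.restrict Set.univ ≤ cu • ν) (hB : MeasurableSet B) (hc : c ≠ ∞)
    (h : μ.restrict B ≤ c • ν) {c' : ℝ≥0∞} (hc' : c' ≠ ∞) (h' : μ.restrict Bᶜ ≤ c' • ν) :
    indicatorCLM (E := E) (p := p) 𝕜 .univ hcu hu - indicatorCLM 𝕜 hB hc h =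
      indicatorCLM 𝕜 hB.compl hc' h' := by
  ext1 f
  refine Lp.ext ?_
  filter_upwards [Lp.coeFn_sub (indicatorCLM 𝕜 .univ hcu hu f) (indicatorCLM 𝕜 hB hc h f),
    coeFn_indicatorCLM 𝕜 .univ hcu hu f, coeFn_indicatorCLM 𝕜 hB hc h f,
    coeFn_indicatorCLM 𝕜 hB.compl hc' h' f] with x hsub huniv hB hBc
  rw [sub_apply, hsub, Pi.sub_apply, huniv, hB, hBc, Set.indicator_univ,
    Set.indicator_compl, Pi.sub_apply]

theorem indicatorCLM_univ_toLp (hc : c ≠ ∞) (h : μ.restrict Set.univ ≤ c • ν) {f : α → E}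
    (hfν : MemLp f p ν) (hfμ : MemLp f p μ) :
    indicatorCLM 𝕜 .univ hc h (hfν.toLp f) = hfμ.toLp f := by
  refine Lp.ext ?_
  filter_upwards [coeFn_indicatorCLM 𝕜 .univ hc h (hfν.toLp f), hfμ.coeFn_toLp,
    indicator_ae_eq_of_restrict_le_smul .univ h hfν.coeFn_toLp] with x h₁ h₂ h₃
  rw [h₁, h₂, h₃, Set.indicator_univ]

theorem isCompactOperator_indicatorCLM_of_finite [MeasurableSingletonClass α] [ProperSpace 𝕜]
    (hBfin : B.Finite) (hμB : ∀ a ∈ B, μ {a} ≠ ∞) (hB : MeasurableSet B) (hc : c ≠ ∞)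
    (h : μ.restrict B ≤ c • ν) : IsCompactOperator (indicatorCLM (E := 𝕜) (p := p) 𝕜 hB hc h) := by
  have := hBfin.fintype
  obtain ⟨δ, hδ⟩ : ∃ δ : B → Lp 𝕜 p μ, ∀ a, δ a =ᵐ[μ] ({(a : α)} : Set α).indicator 1 :=
    ⟨fun a => indicatorConstLp p (measurableSet_singleton a.1) (hμB a a.2) 1,
      fun _ => indicatorConstLp_coeFn⟩
  have hrange : LinearMap.range
      (indicatorCLM (E := 𝕜) (p := p) 𝕜 hB hc h : Lp 𝕜 p ν →ₗ[𝕜] Lp 𝕜 p μ) ≤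
        Submodule.span 𝕜 (Set.range δ) := by
    rintro _ ⟨f, rfl⟩
    have hsum : indicatorCLM 𝕜 hB hc h f = ∑ a : B, f a • δ a := by
      refine Lp.ext ?_
      filter_upwards [coeFn_indicatorCLM 𝕜 hB hc h f,
        Lp.coeFn_finsetSum Finset.univ (fun a : B => f a • δ a),
        ae_all_iff.2 fun a : B => Lp.coeFn_smul (f a) (δ a),
        ae_all_iff.2 hδ] with x h₁ h₂ h₃ h₄
      rw [h₁, h₂, Finset.sum_apply, Set.indicator_eq_sum_mul_indicator_singleton]
      simp only [h₃, Pi.smul_apply, h₄, smul_eq_mul]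
    rw [ContinuousLinearMap.coe_coe, hsum]
    exact Submodule.sum_mem _ fun a _ => Submodule.smul_mem _ _ (Submodule.subset_span ⟨a, rfl⟩)
  have := FiniteDimensional.span_of_finite 𝕜 (Set.finite_range δ)
  have := Submodule.finiteDimensional_of_le hrange
  exact isCompactOperator_of_finiteDimensional_range _

end MeasureTheory.Lp

noncomputable def sobolevWeight {n : ℕ} (m : Fin n → ℤ) : ℝ := 1 + ∑ j, |(m j : ℝ)| ^ 2

section Sobolev

variable {n : ℕ} {s t : ℝ}

theorem one_le_sobolevWeight (m : Fin n → ℤ) : 1 ≤ sobolevWeight m :=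
  le_add_of_nonneg_right (Finset.sum_nonneg fun _ _ => sq_nonneg _)

theorem finite_setOf_sobolevWeight_le (R : ℝ) :
    {m : Fin n → ℤ | sobolevWeight m ≤ R}.Finite := by
  refine (isCompact_closedBall (0 : Fin n → ℤ) √R).finite_of_discrete.subset fun m hm => ?_
  rw [mem_closedBall_zero_iff, pi_norm_le_iff_of_nonneg (Real.sqrt_nonneg _)]
  intro j
  rw [Int.norm_eq_abs]
  refine Real.abs_le_sqrt (le_of_lt ?_)
  calc (m j : ℝ) ^ 2 = |(m j : ℝ)| ^ 2 := (sq_abs _).symm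
    _ ≤ ∑ i, |(m i : ℝ)| ^ 2 := Finset.single_le_sum (f := fun i => |(m i : ℝ)| ^ 2)
        (fun i _ => sq_nonneg _) (Finset.mem_univ j)
    _ < sobolevWeight m := lt_one_add _
    _ ≤ R := hm

theorem sobolevMeasure_singleton_ne_top (t : ℝ) (m : Fin n → ℤ) :
    sobolevMeasure n t {m} ≠ ∞ := by
  rw [sobolevMeasure, withDensity_apply _ (measurableSet_singleton m), lintegral_singleton,
    Measure.count_singleton, mul_one]
  exact ENNReal.ofReal_ne_top

theorem sobolevMeasure_restrict_le_smul {R : ℝ} (hts : t ≤ s) (hR : 0 < R)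
    {B : Set (Fin n → ℤ)} (hB : ∀ m ∈ B, R ≤ sobolevWeight m) :
    (sobolevMeasure n t).restrict B ≤ ENNReal.ofReal (R ^ (t - s)) • sobolevMeasure n s := by
  refine Measure.restrict_withDensity_le_smul .of_discrete (measurable_of_countable _)
    fun m hm => ?_
  rw [← ENNReal.ofReal_mul (by positivity)]
  exact ENNReal.ofReal_le_ofReal (Real.rpow_le_rpow_sub_mul_rpow hR (hB m hm) hts)

theorem sobolevMeasure_restrict_le (hts : t ≤ s) (B : Set (Fin n → ℤ)) :
    (sobolevMeasure n t).restrict B ≤ (1 : ℝ≥0∞) • sobolevMeasure n s := by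
  simpa using sobolevMeasure_restrict_le_smul hts one_pos fun m _ => one_le_sobolevWeight m

noncomputable def sobolevCutoff (hts : t ≤ s) (B : Set (Fin n → ℤ)) :
    Lp ℂ 2 (sobolevMeasure n s) →L[ℂ] Lp ℂ 2 (sobolevMeasure n t) :=
  Lp.indicatorCLM ℂ .of_discrete ENNReal.one_ne_top (sobolevMeasure_restrict_le hts B)

theorem isCompactOperator_sobolevCutoff (hts : t ≤ s) {B : Set (Fin n → ℤ)} (hB : B.Finite) :
    IsCompactOperator (sobolevCutoff hts B) :=
  Lp.isCompactOperator_indicatorCLM_of_finite hB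
    (fun m _ => sobolevMeasure_singleton_ne_top t m) _ _ _

theorem norm_sobolevCutoff_univ_sub_le (hts : t ≤ s) {R : ℝ} (hR : 0 < R) :
    ‖sobolevCutoff hts Set.univ - sobolevCutoff hts {m : Fin n → ℤ | sobolevWeight m ≤ R}‖ ≤
      √(R ^ (t - s)) := by
  have htail := sobolevMeasure_restrict_le_smul hts hR
    (B := {m : Fin n → ℤ | sobolevWeight m ≤ R}ᶜ) fun _ hm => le_of_lt (not_le.1 hm)
  rw [sobolevCutoff, sobolevCutoff, Lp.indicatorCLM_univ_sub_indicatorCLM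
    (hc' := ENNReal.one_ne_top) (h' := sobolevMeasure_restrict_le hts _)]
  refine (Lp.norm_indicatorCLM_le _ _ _ ENNReal.ofReal_ne_top htail).trans_eq ?_
  rw [ENNReal.toReal_ofReal (by positivity), Real.sqrt_eq_rpow]
  norm_num

theorem tendsto_sobolevCutoff (hst : t < s) :
    Tendsto (fun R => sobolevCutoff (n := n) hst.le {m | sobolevWeight m ≤ R}) atTop
      (𝓝 (sobolevCutoff hst.le Set.univ)) := by
  rw [tendsto_iff_norm_sub_tendsto_zero]
  have hlim : Tendsto (fun R : ℝ => √(R ^ (t - s))) atTop (𝓝 0) := by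
    simpa using (tendsto_rpow_neg_atTop (sub_pos.2 hst)).sqrt
  refine squeeze_zero' (Eventually.of_forall fun R => norm_nonneg _) ?_ hlim
  filter_upwards [eventually_gt_atTop 0] with R hR
  rw [norm_sub_rev]
  exact norm_sobolevCutoff_univ_sub_le hst.le hR

end Sobolev

/-- The inclusion `H^s ↪ H^t` for `s > t` is a compact operator: there is a compact
continuous linear map `H^s → H^t` agreeing with the identity on finitely supported
sequences. -/
theorem rellich_compact_inclusion (n : ℕ) (s t : ℝ) (hst : t < s) :
    ∃ T : Lp ℂ 2 (sobolevMeasure n s) →L[ℂ] Lp ℂ 2 (sobolevMeasure n t),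
      IsCompactOperator T ∧
      ∀ f : (Fin n → ℤ) → ℂ, (Function.support f).Finite →
        ∀ (hfs : MemLp f 2 (sobolevMeasure n s)) (hft : MemLp f 2 (sobolevMeasure n t)),
          T (hfs.toLp f) = hft.toLp f :=
  ⟨sobolevCutoff hst.le Set.univ,
    isCompactOperator_of_tendsto (tendsto_sobolevCutoff hst)
      (Eventually.of_forall fun R => isCompactOperator_sobolevCutoff hst.le
        (finite_setOf_sobolevWeight_le R)),
    fun _ _ hfs hft => Lp.indicatorCLM_univ_toLp _ _ hfs hft⟩
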